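/- In a preorder (consequence relation ⊢) with binary meets (conjunction ∧ as greatest lower bound) and a residual → for conjunction (A ∧ B ⊢ C iff A ⊢ B → C), if there exists a statement ξ such that ξ ⊣⊢ (ξ → A), then ⊤ ⊢ A (i.e., A follows from any statement; the system is trivial). -/
import Mathlib

/-- Curry triviality in a preorder with meets, residuated implication, and top. -/
theorem curry_preorder_trivial (P : Type*) [Preorder P]
    (meet : P → P → P) (imp : P → P → P) (top : P)
    (hmeet : ∀ A B C : P, (A ≤ B ∧ A ≤ C) ↔ A ≤ meet B C)
    (hres : ∀ A B C : P, meet A B ≤ C ↔ A ≤ imp B C)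
    (htop : ∀ X : P, X ≤ top)
    (A : P) (h : ∃ ξ : P, ξ ≤ imp ξ A ∧ imp ξ A ≤ ξ) :
    top ≤ A := by
  obtain ⟨ξ, h1, h2⟩ := h
  have hself : ξ ≤ meet ξ ξ := (hmeet ξ ξ ξ).mp ⟨le_refl _, le_refl _⟩
  have hxa : ξ ≤ A := le_trans hself ((hres ξ ξ A).mpr h1)
  have hproj : meet top ξ ≤ ξ := ((hmeet (meet top ξ) top ξ).mpr (le_refl _)).2
  have : top ≤ imp ξ A := (hres top ξ A).mp (le_trans hproj hxa)
  exact le_trans (le_trans this h2) hxa
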